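/- For d = 2j+1, equal parameters b = a, and real r, s with jr - α - js + β not congruent to 0 modulo d, the overlap satisfies ⟨jα;ra | jβ;sa⟩ = (1/d) q^{j(β-α)} · sin(π(jr - α - js + β)) / sin(π(jr - α - js + β)/d). -/

import Mathlib

open Complex Finset

/-- The phase function `ρ(j,m,x,y,z) = (j+m)(j-m+1)x/2 - jmy + (j+m)z`. -/
noncomputable def rho (j m x y z : ℝ) : ℝ :=
  (j + m) * (j - m + 1) * x / 2 - j * m * y + (j + m) * z

/-- The vector `|jα;ra⟩` of components `(1/√d) q^{ρ(j, k-j, a, r, α)}`, `k = 0,…,d-1`,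
where `j = (d-1)/2` and `q^x = exp(2πix/d)`. -/
noncomputable def mubVec (d : ℕ) (a r α : ℝ) : Fin d → ℂ := fun k =>
  ((1 / Real.sqrt d : ℝ) : ℂ) *
    Complex.exp (2 * (Real.pi : ℂ) * Complex.I *
      ((rho (((d : ℝ) - 1) / 2) ((k : ℝ) - ((d : ℝ) - 1) / 2) a r α : ℝ) / (d : ℂ)))

/-- The overlap `⟨jα;ra | jβ;sb⟩` (standard Hermitian inner product on `ℂ^d`). -/
noncomputable def overlap (d : ℕ) (a r : ℝ) (α : ℝ) (b s : ℝ) (β : ℝ) : ℂ :=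
  ∑ k : Fin d, (starRingEnd ℂ) (mubVec d a r α k) * mubVec d b s β k

/-! With `b = a` the quadratic parts of the two phases cancel, and with `m = k - j` the summand
becomes `q^{j(β-α)} q^{mθ} / d`, `θ = jr - α - js + β`. The remaining sum over `m = -j, …, j` is
a Dirichlet kernel in `x = πθ/d`: multiplied by `2i sin x` it telescopes to `2i sin(dx)`. -/

theorem Complex.sum_range_exp_mul_sin (n : ℕ) (x : ℂ) :
    (∑ k ∈ range n, exp ((2 * k + 1 - n) * x * I)) * sin x = sin (n * x) := by
  have two_I_sin (y : ℂ) : 2 * I * sin y = exp (y * I) - exp (-y * I) := by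
    rw [mul_comm 2, mul_assoc, two_sin]
    linear_combination (exp (-y * I) - exp (y * I)) * I_sq
  have hstep (k : ℕ) : exp ((2 * k + 1 - n) * x * I) * (2 * I * sin x) =
      exp ((2 * (k + 1 : ℕ) - n) * x * I) - exp ((2 * k - n) * x * I) := by
    rw [two_I_sin, mul_sub, ← exp_add, ← exp_add]
    push_cast
    ring_nf
  apply mul_left_cancel₀ (mul_ne_zero two_ne_zero I_ne_zero)
  rw [two_I_sin, mul_left_comm, sum_mul, sum_congr rfl fun k _ => hstep k,
    sum_range_sub fun k : ℕ => exp ((2 * k - n) * x * I)]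
  push_cast
  ring_nf

theorem sin_pi_mul_div_ne_zero {θ : ℝ} {d : ℕ} (hd : d ≠ 0) (hθ : ∀ k : ℤ, θ ≠ d * k) :
    Real.sin (Real.pi * θ / d) ≠ 0 := by
  rw [Ne, Real.sin_eq_zero_iff]
  rintro ⟨k, hk⟩
  refine hθ k ?_
  field_simp at hk
  linarith

theorem conj_mubVec_mul_mubVec (d : ℕ) (a r s α β : ℝ) (k : Fin d) :
    starRingEnd ℂ (mubVec d a r α k) * mubVec d a s β k =
      1 / d * exp (2 * Real.pi * I * ((((d : ℝ) - 1) / 2 * (β - α) : ℝ) / d)) *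
        exp ((2 * k + 1 - d) *
          (Real.pi * (((d : ℝ) - 1) / 2 * r - α - ((d : ℝ) - 1) / 2 * s + β) / d : ℝ) * I) := by
  have hsqrt : (1 / Real.sqrt d) * (1 / Real.sqrt d) = 1 / (d : ℝ) := by
    rw [div_mul_div_comm, one_mul, Real.mul_self_sqrt d.cast_nonneg]
  simp only [mubVec, map_mul, ← exp_conj, map_div₀, map_ofNat, conj_ofReal, conj_I, map_natCast]
  rw [mul_mul_mul_comm, ← ofReal_mul, hsqrt, ← exp_add, mul_assoc _ (exp _), ← exp_add]
  simp only [rho]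
  push_cast
  congr 2
  ring

theorem stmt_9 (d : ℕ) (hd : 2 ≤ d) (a r s : ℝ) (α β : ℕ)
    (hθ : ∀ k : ℤ, ((d : ℝ) - 1) / 2 * r - α - ((d : ℝ) - 1) / 2 * s + β ≠ d * k) :
    overlap d a r α a s β =
      (1 / (d : ℂ)) *
        Complex.exp (2 * (Real.pi : ℂ) * Complex.I *
          ((((d : ℝ) - 1) / 2 * ((β : ℝ) - α) : ℝ) / (d : ℂ))) *
        ((Real.sin (Real.pi * (((d : ℝ) - 1) / 2 * r - α - ((d : ℝ) - 1) / 2 * s + β)) : ℝ) /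
          (Real.sin (Real.pi * (((d : ℝ) - 1) / 2 * r - α - ((d : ℝ) - 1) / 2 * s + β) / d) : ℝ)) := by
  set θ : ℝ := ((d : ℝ) - 1) / 2 * r - α - ((d : ℝ) - 1) / 2 * s + β
  have hd0 : d ≠ 0 := by omega
  have hsin : sin ((Real.pi * θ / d : ℝ) : ℂ) ≠ 0 := by
    exact_mod_cast sin_pi_mul_div_ne_zero hd0 hθ
  have hsin_mul : sin (d * ((Real.pi * θ / d : ℝ) : ℂ)) = sin (Real.pi * θ : ℝ) := by
    push_cast
    field_simp
  rw [overlap, sum_congr rfl fun k _ => conj_mubVec_mul_mubVec d a r s α β k, ← mul_sum,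
    Fin.sum_univ_eq_sum_range (fun k => exp ((2 * k + 1 - d) * ((Real.pi * θ / d : ℝ) : ℂ) * I)),
    eq_div_of_mul_eq hsin (sum_range_exp_mul_sin d _), hsin_mul, ofReal_sin, ofReal_sin]
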